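/- In a binary tree where every node has 0 or 2 children, node weights are nonnegative, all leaves have equal weighted level L (weighted level = sum of weights on the root-to-leaf path), no leaf has weight 0, and there are at most c total violations (a violation is either a node of weight > 1, counted with multiplicity w-1, or a node of weight 0 whose parent has weight 0), the height of the tree is O(c + log n) where n is the number of leaves. -/
import Mathlib


/-- Binary trees where every node has 0 or 2 children, each carrying a
nonnegative integer weight. -/
inductive WTree : Type where
  | leaf (w : ℕ) : WTree
  | node (w : ℕ) (l r : WTree) : WTree

namespace WTree

def height : WTree → ℕ
  | leaf _ => 0
  | node _ l r => 1 + max (height l) (height r)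

def numLeaves : WTree → ℕ
  | leaf _ => 1
  | node _ l r => numLeaves l + numLeaves r

def weight : WTree → ℕ
  | leaf w => w
  | node w _ _ => w

/-- The list of weighted levels of the leaves, given the accumulated weight
`acc` of the path above. -/
def leafLevels : WTree → ℕ → List ℕ
  | leaf w, acc => [acc + w]
  | node w l r, acc => leafLevels l (acc + w) ++ leafLevels r (acc + w)

/-- No leaf has weight 0 (no leaf is red). -/
def leavesNonRed : WTree → Prop
  | leaf w => w ≠ 0
  | node _ l r => leavesNonRed l ∧ leavesNonRed r

/-- Number of overweight violations: each node of weight w > 1 contributes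
w - 1 (natural subtraction). -/
def overweightViol : WTree → ℕ
  | leaf w => w - 1
  | node w l r => (w - 1) + overweightViol l + overweightViol r

/-- Number of red-red violations: nodes of weight 0 whose parent has weight 0. -/
def redredViol : WTree → ℕ
  | leaf _ => 0
  | node w l r =>
      ((if w = 0 ∧ weight l = 0 then 1 else 0) +
       (if w = 0 ∧ weight r = 0 then 1 else 0)) +
      redredViol l + redredViol r

lemma leafLevels_ne_nil (t : WTree) (acc : ℕ) : leafLevels t acc ≠ [] := by
  induction t generalizing acc with
  | leaf w => simp [leafLevels]
  | node w l r ihl ihr => simp [leafLevels, ihl]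

lemma leafLevels_shift (t : WTree) (acc : ℕ) :
    leafLevels t acc = (leafLevels t 0).map (acc + ·) := by
  induction t generalizing acc with
  | leaf w => simp [leafLevels]
  | node w l r ihl ihr =>
    simp only [leafLevels, List.map_append, List.map_map]
    rw [ihl (acc + w), ihr (acc + w), ihl (0 + w), ihr (0 + w), List.map_map, List.map_map]
    congr 2 <;> funext x <;> simp <;> omega

lemma node_levels {w L : ℕ} {l r : WTree}
    (h : ∀ x ∈ leafLevels (node w l r) 0, x = L) :
    w ≤ L ∧ (∀ x ∈ leafLevels l 0, x = L - w) ∧ (∀ x ∈ leafLevels r 0, x = L - w) := by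
  have h' : ∀ x ∈ leafLevels l (0 + w) ++ leafLevels r (0 + w), x = L := h
  rw [leafLevels_shift l, leafLevels_shift r] at h'
  simp only [List.mem_append, List.mem_map] at h'
  have hl : ∀ x ∈ leafLevels l 0, 0 + w + x = L := fun x hx =>
    h' _ (Or.inl ⟨x, hx, rfl⟩)
  have hr : ∀ x ∈ leafLevels r 0, 0 + w + x = L := fun x hx =>
    h' _ (Or.inr ⟨x, hx, rfl⟩)
  obtain ⟨y, hy⟩ := List.exists_mem_of_ne_nil _ (leafLevels_ne_nil l 0)
  have := hl y hy
  refine ⟨by omega, fun x hx => by have := hl x hx; omega,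
    fun x hx => by have := hr x hx; omega⟩

lemma numLeaves_pos (t : WTree) : 1 ≤ numLeaves t := by
  induction t with
  | leaf w => simp [numLeaves]
  | node w l r ihl ihr => simp [numLeaves]; omega

/-- Lemma A -/
lemma pow_le (t : WTree) : ∀ L : ℕ, (∀ x ∈ leafLevels t 0, x = L) →
    2 ^ L ≤ 2 * numLeaves t * 2 ^ overweightViol t := by
  induction t with
  | leaf w =>
    intro L h
    have : 0 + w = L := h _ (by simp [leafLevels])
    subst this
    simp only [numLeaves, overweightViol]
    rcases w with _ | s
    · simp
    · simp only [Nat.zero_add, Nat.succ_sub_one]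
      rw [pow_succ]
      omega
  | node w l r ihl ihr =>
    intro L h
    obtain ⟨hwL, hl, hr⟩ := node_levels h
    have Hl := ihl _ hl
    have Hr := ihr _ hr
    simp only [numLeaves, overweightViol]
    rcases w with _ | s
    · -- w = 0
      have h1 : (0:ℕ) - 1 + overweightViol l + overweightViol r
          = overweightViol l + overweightViol r := by omega
      have h0 : L - 0 = L := by omega
      rw [h0] at Hl
      rw [h1, pow_add, ← mul_assoc]
      calc 2 ^ L ≤ 2 * numLeaves l * 2 ^ overweightViol l := Hl
        _ ≤ 2 * (numLeaves l + numLeaves r) * 2 ^ overweightViol l :=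
            Nat.mul_le_mul_right _ (by omega)
        _ ≤ 2 * (numLeaves l + numLeaves r) * 2 ^ overweightViol l
              * 2 ^ overweightViol r :=
            Nat.le_mul_of_pos_right _ (by positivity)
    · -- w = s+1
      have key : 2 ^ (s + 1 - 1 + overweightViol l + overweightViol r)
          = 2 ^ s * 2 ^ overweightViol l * 2 ^ overweightViol r := by
        simp only [Nat.add_sub_cancel]
        rw [pow_add, pow_add]
      rw [key]
      have expand : 2 * (numLeaves l + numLeaves r)
            * (2 ^ s * 2 ^ overweightViol l * 2 ^ overweightViol r)
          = (2 * numLeaves l * 2 ^ overweightViol l) * (2 ^ overweightViol r * 2 ^ s)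
            + (2 * numLeaves r * 2 ^ overweightViol r) * (2 ^ overweightViol l * 2 ^ s) := by
        ring
      have p1 : 2 ^ (L - (s+1)) * 2 ^ s
          ≤ (2 * numLeaves l * 2 ^ overweightViol l) * (2 ^ overweightViol r * 2 ^ s) :=
        Nat.mul_le_mul Hl (Nat.le_mul_of_pos_left _ (by positivity))
      have p2 : 2 ^ (L - (s+1)) * 2 ^ s
          ≤ (2 * numLeaves r * 2 ^ overweightViol r) * (2 ^ overweightViol l * 2 ^ s) :=
        Nat.mul_le_mul Hr (Nat.le_mul_of_pos_left _ (by positivity))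
      have hsum : 2 ^ (L - (s+1)) * 2 ^ s + 2 ^ (L - (s+1)) * 2 ^ s = 2 ^ L := by
        rw [← pow_add, ← two_mul, ← pow_succ']
        congr 1
        omega
      rw [expand, ← hsum]
      exact Nat.add_le_add p1 p2

/-- Lemma B -/
lemma height_le (t : WTree) : ∀ L : ℕ, leavesNonRed t →
    (∀ x ∈ leafLevels t 0, x = L) →
    height t ≤ 2 * L + redredViol t + (if weight t = 0 then 1 else 0) := by
  induction t with
  | leaf w => intro L _ _; simp [height]
  | node w l r ihl ihr =>
    intro L hnr h
    obtain ⟨hwL, hl, hr⟩ := node_levels h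
    have Hl := ihl _ hnr.1 hl
    have Hr := ihr _ hnr.2 hr
    show 1 + max (height l) (height r)
        ≤ 2 * L + (((if w = 0 ∧ weight l = 0 then 1 else 0)
            + (if w = 0 ∧ weight r = 0 then 1 else 0))
            + redredViol l + redredViol r) + (if w = 0 then 1 else 0)
    rcases w with _ | s
    · simp only [eq_self_iff_true, true_and, if_true]
      set a := (if weight l = 0 then (1:ℕ) else 0) with ha
      set b := (if weight r = 0 then (1:ℕ) else 0) with hb
      have il : a ≤ 1 := by rw [ha]; split <;> omega
      have ir : b ≤ 1 := by rw [hb]; split <;> omega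
      omega
    · have hne : ¬ (s + 1 = 0) := by omega
      simp only [hne, false_and, if_false]
      set a := (if weight l = 0 then (1:ℕ) else 0) with ha
      set b := (if weight r = 0 then (1:ℕ) else 0) with hb
      have il : a ≤ 1 := by rw [ha]; split <;> omega
      have ir : b ≤ 1 := by rw [hb]; split <;> omega
      omega

end WTree

open WTree in
/-- If all leaves have the same weighted level, no leaf has weight 0, and
there are at most c violations, then the height is O(c + log n) where n is
the number of leaves. -/
theorem stmt_9 :
    ∃ K : ℝ, 0 < K ∧
      ∀ (t : WTree) (L c : ℕ),
        (∀ x ∈ leafLevels t 0, x = L) →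
        leavesNonRed t →
        overweightViol t + redredViol t ≤ c →
        (height t : ℝ) ≤ K * ((c : ℝ) + Real.log (numLeaves t) + 1) := by
  refine ⟨3, by norm_num, fun t L c hlev hnr hviol => ?_⟩
  set n := numLeaves t with hn
  have hn1 : 1 ≤ n := numLeaves_pos t
  have hA := pow_le t L hlev
  have hB := height_le t L hnr hlev
  -- L ≤ Nat.log 2 n + overweightViol t + 1
  have hlog : n < 2 ^ (Nat.log 2 n + 1) := Nat.lt_pow_succ_log_self (by norm_num) n
  have hL : L ≤ Nat.log 2 n + overweightViol t + 1 := by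
    have h2 : 2 ^ L < 2 ^ (Nat.log 2 n + overweightViol t + 2) := by
      calc 2 ^ L ≤ 2 * n * 2 ^ overweightViol t := hA
        _ < 2 * 2 ^ (Nat.log 2 n + 1) * 2 ^ overweightViol t := by
            have : 0 < 2 ^ overweightViol t := by positivity
            have h3 : 2 * n < 2 * 2 ^ (Nat.log 2 n + 1) := by omega
            exact Nat.mul_lt_mul_of_lt_of_le h3 le_rfl this
        _ = 2 ^ (Nat.log 2 n + overweightViol t + 2) := by
            rw [pow_add, pow_add, pow_add]; ring
    have := (Nat.pow_lt_pow_iff_right (a := 2) (by norm_num)).mp h2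
    omega
  -- height bound in ℕ
  have hite : (if weight t = 0 then (1:ℕ) else 0) ≤ 1 := by split <;> omega
  have hH : height t ≤ 2 * Nat.log 2 n + 2 * c + 3 := by omega
  -- pass to ℝ
  have hHr : (height t : ℝ) ≤ 2 * (Nat.log 2 n : ℝ) + 2 * c + 3 := by
    exact_mod_cast hH
  have hlogb : (Nat.log 2 n : ℝ) ≤ Real.logb 2 n := Real.natLog_le_logb n 2
  have hlogn : 0 ≤ Real.log n := Real.log_nonneg (by exact_mod_cast hn1)
  have hlogb2 : Real.logb 2 n ≤ (3 / 2) * Real.log n := by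
    rw [Real.logb, div_le_iff₀ (by positivity)]
    nlinarith [Real.log_two_gt_d9, hlogn]
  have hc : (0:ℝ) ≤ c := Nat.cast_nonneg c
  calc (height t : ℝ) ≤ 2 * (Nat.log 2 n : ℝ) + 2 * c + 3 := hHr
    _ ≤ 2 * ((3/2) * Real.log n) + 2 * c + 3 := by
        have := hlogb.trans hlogb2
        linarith
    _ ≤ 3 * ((c : ℝ) + Real.log n + 1) := by linarith
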